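/- Assume that (Φ is of type C_n or D_n), or (Φ is of type B_n and α_n ∉ I), or (Φ is of type B_n, α_n ∈ I, and r ≤ n − p_k). Then K_r ⊆ 𝒳_r, and moreover (K_r \ K_{r−2}) ∩ 𝒳_{r−2} = ∅ (where K_{r−2} = ∅ if r < 2). -/

import Mathlib

open Finset

inductive RSType where
  | B
  | C
  | D
deriving DecidableEq

noncomputable def eps (n : ℕ) (i : Fin n) : Fin n → ℝ := fun j => if j = i then 1 else 0

noncomputable def simpleRoot (n : ℕ) (t : RSType) (i : Fin n) : Fin n → ℝ :=
  if (i : ℕ) + 1 < n then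
    eps n i - (fun j : Fin n => if (j : ℕ) = (i : ℕ) + 1 then 1 else 0)
  else
    match t with
    | RSType.B => eps n i
    | RSType.C => (2 : ℝ) • eps n i
    | RSType.D => (fun j : Fin n => if (j : ℕ) + 1 = (i : ℕ) then 1 else 0) + eps n i

noncomputable def inn (n : ℕ) (x y : Fin n → ℝ) : ℝ := ∑ i, x i * y i

noncomputable def pairing (n : ℕ) (x y : Fin n → ℝ) : ℝ := 2 * inn n x y / inn n y y

/-- Membership in `Λ^{𝔭_I}` where `I = Π \ {α_{p 1}, …, α_{p k}}`:
`⟨μ, α^∨⟩ ∈ ℕ` for all simple roots `α ∈ I`. -/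
def inLam (n : ℕ) (t : RSType) (p : ℕ → ℕ) (k : ℕ) (μ : Fin n → ℝ) : Prop :=
  ∀ i : Fin n, (∀ j, 1 ≤ j → j ≤ k → (i : ℕ) + 1 ≠ p j) →
    ∃ m : ℕ, pairing n μ (simpleRoot n t i) = (m : ℝ)

def inLamZ (n : ℕ) (t : RSType) (p : ℕ → ℕ) (k : ℕ) (a : Fin n → ℤ) : Prop :=
  inLam n t p k (fun i => (a i : ℝ))

/-- `𝒳_r = {a ∈ ℤ^n : Σ |a_i| ≤ r}` (empty if `r < 0`). -/
def Xr (n : ℕ) (r : ℤ) : Set (Fin n → ℤ) := {a | ∑ i, |a i| ≤ r}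

/-- `𝒳'_r = {a ∈ 𝒳_r : Σ a_i ≡ r (mod 2)}`. -/
def Xr' (n : ℕ) (r : ℤ) : Set (Fin n → ℤ) :=
  {a | a ∈ Xr n r ∧ (2 : ℤ) ∣ ((∑ i, a i) - r)}

/-- `𝒳'_{r,j}`: for `j < n - pk` those `a ∈ 𝒳'_r` with `a_{n-j} ≠ 0`; and
`𝒳'_{r, n - pk} = 𝒳'_r`. -/
def Xrj (n : ℕ) (pk : ℕ) (r : ℤ) (j : ℕ) : Set (Fin n → ℤ) :=
  if j = n - pk then Xr' n r
  else {a | a ∈ Xr' n r ∧ ∃ i : Fin n, (i : ℕ) + j + 1 = n ∧ a i ≠ 0}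

def Yr (n : ℕ) (t : RSType) (p : ℕ → ℕ) (k : ℕ) (r : ℤ) : Set (Fin n → ℤ) :=
  {a | a ∈ Xr n r ∧ inLamZ n t p k a}

def Yr' (n : ℕ) (t : RSType) (p : ℕ → ℕ) (k : ℕ) (r : ℤ) : Set (Fin n → ℤ) :=
  {a | a ∈ Xr' n r ∧ inLamZ n t p k a}

def Yrj (n : ℕ) (t : RSType) (p : ℕ → ℕ) (k : ℕ) (r : ℤ) (j : ℕ) : Set (Fin n → ℤ) :=
  {a | a ∈ Xrj n (p k) r j ∧ inLamZ n t p k a}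

def epsZ (n : ℕ) (i : Fin n) : Fin n → ℤ := fun j => if j = i then 1 else 0

/-- The set `S_μ`: in type `B_n`, if `α_n ∉ I` (i.e. `p k = n`) or `μ_n ≠ 0`, it is
`{μ + hε_i ∈ Λ^{𝔭_I} : 1 ≤ i ≤ n, h ∈ {0, 1, -1}}`; otherwise (and in types `C_n`,
`D_n`) it is `{μ + hε_i ∈ Λ^{𝔭_I} : 1 ≤ i ≤ n, h ∈ {1, -1}}`. -/
def SS (n : ℕ) (t : RSType) (p : ℕ → ℕ) (k : ℕ) (μ : Fin n → ℤ) : Set (Fin n → ℤ) :=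
  {ν | (∃ (i : Fin n) (h : ℤ),
          h ∈ (if t = RSType.B ∧ (p k = n ∨ ∃ i' : Fin n, (i' : ℕ) = n - 1 ∧ μ i' ≠ 0)
               then ({0, 1, -1} : Set ℤ) else ({1, -1} : Set ℤ)) ∧
          ν = μ + h • epsZ n i) ∧
        inLamZ n t p k ν}

/-- `K_0 = {0}` and `K_r = ⋃_{μ ∈ K_{r-1}} S_μ`. -/
def KK (n : ℕ) (t : RSType) (p : ℕ → ℕ) (k : ℕ) : ℕ → Set (Fin n → ℤ)
  | 0 => {0}
  | r + 1 => ⋃ μ ∈ KK n t p k r, SS n t p k μ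

lemma inn_eps (n : ℕ) (x : Fin n → ℝ) (i : Fin n) : inn n x (eps n i) = x i := by
  simp [inn, eps]

lemma inn_sub (n : ℕ) (x y z : Fin n → ℝ) : inn n x (y - z) = inn n x y - inn n x z := by
  simp [inn, mul_sub, Finset.sum_sub_distrib]

lemma inn_add (n : ℕ) (x y z : Fin n → ℝ) : inn n x (y + z) = inn n x y + inn n x z := by
  simp [inn, mul_add, Finset.sum_add_distrib]

lemma inn_smul (n : ℕ) (c : ℝ) (x y : Fin n → ℝ) : inn n x (c • y) = c * inn n x y := by
  simp [inn, Finset.mul_sum]; ring_nf; simp [mul_comm, mul_assoc, mul_left_comm]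

lemma inn_comm (n : ℕ) (x y : Fin n → ℝ) : inn n x y = inn n y x := by
  simp [inn, mul_comm]
lemma pairing_lt (n : ℕ) (t : RSType) (x : Fin n → ℝ) (i : Fin n) (h : (i:ℕ)+1 < n) :
    pairing n x (simpleRoot n t i) = x i - x ⟨(i:ℕ)+1, h⟩ := by
  have hind : (fun j : Fin n => if (j : ℕ) = (i : ℕ) + 1 then (1:ℝ) else 0)
      = eps n ⟨(i:ℕ)+1, h⟩ := by
    funext j; simp [eps, Fin.ext_iff]
  have hne : i ≠ (⟨(i:ℕ)+1, h⟩ : Fin n) := by simp [Fin.ext_iff]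
  rw [pairing, simpleRoot.eq_def, if_pos h, hind, inn_sub, inn_sub, inn_eps, inn_eps, inn_eps, inn_eps]
  simp [eps, hne, hne.symm, Fin.ext_iff]
  ring

lemma pairing_last_B (n : ℕ) (x : Fin n → ℝ) (i : Fin n) (h : ¬((i:ℕ)+1 < n)) :
    pairing n x (simpleRoot n RSType.B i) = 2 * x i := by
  have hroot : simpleRoot n RSType.B i = eps n i := by
    rw [simpleRoot.eq_def, if_neg h]
  rw [pairing, hroot, inn_eps, inn_eps]
  simp [eps]

lemma pairing_last_C (n : ℕ) (x : Fin n → ℝ) (i : Fin n) (h : ¬((i:ℕ)+1 < n)) :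
    pairing n x (simpleRoot n RSType.C i) = x i := by
  have hroot : simpleRoot n RSType.C i = (2:ℝ) • eps n i := by
    rw [simpleRoot.eq_def, if_neg h]
  rw [pairing, hroot, inn_smul, inn_eps, inn_smul, inn_comm, inn_smul, inn_eps]
  simp [eps]
  ring

lemma pairing_last_D (n : ℕ) (hn : 2 ≤ n) (x : Fin n → ℝ) (i : Fin n) (h : ¬((i:ℕ)+1 < n)) :
    pairing n x (simpleRoot n RSType.D i) =
      x ⟨(i:ℕ)-1, by omega⟩ + x i := by
  have hi : (i:ℕ) = n - 1 := by have := i.isLt; omega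
  have hi1 : (i:ℕ) - 1 < n := by omega
  have hind : (fun j : Fin n => if (j : ℕ) + 1 = (i : ℕ) then (1:ℝ) else 0)
      = eps n ⟨(i:ℕ)-1, hi1⟩ := by
    funext j; simp only [eps, Fin.ext_iff]
    congr 1
    simp; omega
  have hne : (⟨(i:ℕ)-1, hi1⟩ : Fin n) ≠ i := by simp [Fin.ext_iff]; omega
  have hroot : simpleRoot n RSType.D i = eps n ⟨(i:ℕ)-1, hi1⟩ + eps n i := by
    rw [simpleRoot.eq_def, if_neg h, hind]
  rw [pairing, hroot, inn_add, inn_add, inn_eps, inn_eps, inn_eps, inn_eps]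
  simp [eps, hne, hne.symm]
  ring



lemma sum_add_eps (n : ℕ) (μ : Fin n → ℤ) (h : ℤ) (i : Fin n) (g : ℤ → ℤ) :
    ∑ j, g ((μ + h • epsZ n i) j) = (∑ j, g (μ j)) - g (μ i) + g (μ i + h) := by
  have key : ∀ j, g ((μ + h • epsZ n i) j)
      = (if j = i then g (μ i + h) - g (μ i) else 0) + g (μ j) := by
    intro j
    by_cases hj : j = i <;> simp [hj, epsZ, Pi.add_apply]
  rw [Finset.sum_congr rfl (fun j _ => key j), Finset.sum_add_distrib,
    Finset.sum_ite_eq' Finset.univ i]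
  simp; ring

def av (n : ℕ) (a : Fin n → ℤ) (m : ℕ) : ℤ := if h : m < n then a ⟨m, h⟩ else 0

lemma av_add_eps (n : ℕ) (a : Fin n → ℤ) (h : ℤ) (i : Fin n) (m : ℕ) :
    av n (a + h • epsZ n i) m = av n a m + (if m = (i:ℕ) then h else 0) := by
  unfold av
  by_cases hm : m < n
  · rw [dif_pos hm, dif_pos hm]
    by_cases he : m = (i:ℕ)
    · have : (⟨m, hm⟩ : Fin n) = i := Fin.ext he
      simp [this, epsZ, he]
    · have : (⟨m, hm⟩ : Fin n) ≠ i := by simp [Fin.ext_iff, he]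
      simp [this, epsZ, he]
  · have : ¬ (m = (i:ℕ)) := by have := i.isLt; omega
    simp [dif_neg hm, this]

lemma abs_parity (n : ℕ) (a : Fin n → ℤ) : (2:ℤ) ∣ (∑ i, |a i|) - (∑ i, a i) := by
  rw [← Finset.sum_sub_distrib]
  apply Finset.dvd_sum
  intro i _
  rcases abs_cases (a i) with ⟨h, _⟩ | ⟨h, _⟩ <;> rw [h] <;> ring_nf <;> omega

def notp (p : ℕ → ℕ) (k m : ℕ) : Prop := ∀ j, 1 ≤ j → j ≤ k → m ≠ p j

def Lam' (n : ℕ) (t : RSType) (p : ℕ → ℕ) (k : ℕ) (a : Fin n → ℤ) : Prop :=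
  (∀ m : ℕ, m + 1 < n → notp p k (m+1) → av n a (m+1) ≤ av n a m) ∧
  (notp p k n →
    match t with
    | RSType.B => 0 ≤ av n a (n-1)
    | RSType.C => 0 ≤ av n a (n-1)
    | RSType.D => 0 ≤ av n a (n-2) + av n a (n-1))

lemma lam_zero (n : ℕ) (t : RSType) (p : ℕ → ℕ) (k : ℕ) : Lam' n t p k 0 := by
  constructor
  · intro m _ _; simp [av]
  · intro _; match t with
    | RSType.B => simp [av]
    | RSType.C => simp [av]
    | RSType.D => simp [av]

lemma lam_add_eps (n : ℕ) (t : RSType) (p : ℕ → ℕ) (k : ℕ) (a : Fin n → ℤ) (i : Fin n)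
    (hLam : Lam' n t p k a)
    (hlt : ∀ m : ℕ, m + 1 = (i:ℕ) → av n a (i:ℕ) + 1 ≤ av n a m) :
    Lam' n t p k (a + (1:ℤ) • epsZ n i) := by
  constructor
  · intro m hm hnp
    rw [av_add_eps, av_add_eps]
    have h0 := hLam.1 m hm hnp
    split_ifs with h1 h2 h2
    · omega
    · have h3 := hlt m h1
      rw [← h1] at h3
      omega
    · omega
    · omega
  · intro hnp
    have h0 := hLam.2 hnp
    match t with
    | RSType.B => rw [av_add_eps]; split_ifs <;> omega
    | RSType.C => rw [av_add_eps]; split_ifs <;> omega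
    | RSType.D => rw [av_add_eps, av_add_eps]; split_ifs <;> omega

lemma lam_sub_eps (n : ℕ) (t : RSType) (p : ℕ → ℕ) (k : ℕ) (a : Fin n → ℤ) (i : Fin n)
    (hLam : Lam' n t p k a)
    (hmax : ∀ m : ℕ, (i:ℕ) < m → av n a m = 0)
    (hnonneg : ∀ m : ℕ, 0 ≤ av n a m)
    (hpos : 1 ≤ av n a (i:ℕ)) :
    Lam' n t p k (a + (-1:ℤ) • epsZ n i) := by
  constructor
  · intro m hm hnp
    rw [av_add_eps, av_add_eps]
    have h0 := hLam.1 m hm hnp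
    split_ifs with h1 h2 h2
    · omega
    · omega
    · have h3 := hmax (m+1) (by omega)
      have h4 := hpos
      rw [← h2] at h4
      omega
    · omega
  · intro _
    have e1 := hnonneg (n-1)
    have e2 := hnonneg (n-2)
    match t with
    | RSType.B =>
      rw [av_add_eps]; split_ifs with h1
      · have h4 := hpos; rw [← h1] at h4; omega
      · omega
    | RSType.C =>
      rw [av_add_eps]; split_ifs with h1
      · have h4 := hpos; rw [← h1] at h4; omega
      · omega
    | RSType.D =>
      rw [av_add_eps, av_add_eps]
      have h4 := hpos
      split_ifs with h1 h2 h2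
      · have h5 := hpos
        rw [← h1] at h4
        rw [← h2] at h5
        omega
      · rw [← h1] at h4; omega
      · rw [← h2] at h4; omega
      · omega

lemma av_coe (n : ℕ) (a : Fin n → ℤ) (i : Fin n) : av n a (i:ℕ) = a i := by
  simp [av, i.isLt]

lemma step_back (n : ℕ) (t : RSType) (p : ℕ → ℕ) (k : ℕ) (a : Fin n → ℤ)
    (hLam : Lam' n t p k a) (hpos : 0 < ∑ j, |a j|) :
    ∃ (μ : Fin n → ℤ) (i : Fin n) (h : ℤ), Lam' n t p k μ ∧
      (h = 1 ∨ h = -1) ∧ a = μ + h • epsZ n i ∧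
      (∑ j, |μ j|) = (∑ j, |a j|) - 1 ∧ (∑ j, μ j) = (∑ j, a j) - h := by
  by_cases hneg : ∃ j, a j < 0
  · set S : Finset (Fin n) := Finset.univ.filter (fun j => a j < 0) with hSdef
    have hS : S.Nonempty := by
      obtain ⟨j, hj⟩ := hneg
      exact ⟨j, by simp [hSdef, hj]⟩
    set i := S.min' hS with hidef
    have hi : a i < 0 := by
      have := S.min'_mem hS
      simp [hSdef] at this
      exact this
    have hmin : ∀ j ∈ S, i ≤ j := fun j hj => S.min'_le j hj
    have hleft : ∀ m : ℕ, m < (i:ℕ) → 0 ≤ av n a m := by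
      intro m hm
      unfold av
      split
      · rename_i hmn
        by_contra hcon
        push_neg at hcon
        have hmem : (⟨m, hmn⟩ : Fin n) ∈ S := by simp [hSdef]; omega
        have := hmin _ hmem
        simp [Fin.le_def] at this
        omega
      · omega
    refine ⟨a + (1:ℤ) • epsZ n i, i, -1, ?_, Or.inr rfl, ?_, ?_, ?_⟩
    · apply lam_add_eps n t p k a i hLam
      intro m hm
      have := hleft m (by omega)
      rw [av_coe]
      omega
    · funext j
      by_cases hj : j = i <;> simp [hj, epsZ]
    · rw [sum_add_eps n a 1 i (fun x => |x|)]
      have h1 : |a i| = -a i := abs_of_neg hi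
      have h2 : |a i + 1| = -(a i + 1) := abs_of_nonpos (by omega)
      omega
    · rw [sum_add_eps n a 1 i (fun x => x)]
      ring
  · push_neg at hneg
    have hex : ∃ j, 0 < a j := by
      by_contra hcon
      push_neg at hcon
      have : ∀ j ∈ Finset.univ, |a j| = 0 := by
        intro j _
        have : a j = 0 := le_antisymm (hcon j) (hneg j)
        simp [this]
      rw [Finset.sum_congr rfl this] at hpos
      simp at hpos
    set S : Finset (Fin n) := Finset.univ.filter (fun j => 0 < a j) with hSdef
    have hS : S.Nonempty := by
      obtain ⟨j, hj⟩ := hex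
      exact ⟨j, by simp [hSdef, hj]⟩
    set i := S.max' hS with hidef
    have hi : 0 < a i := by
      have := S.max'_mem hS
      simp [hSdef] at this
      exact this
    have hmax' : ∀ j ∈ S, j ≤ i := fun j hj => S.le_max' j hj
    have hright : ∀ m : ℕ, (i:ℕ) < m → av n a m = 0 := by
      intro m hm
      unfold av
      split
      · rename_i hmn
        by_cases hz : 0 < a ⟨m, hmn⟩
        · have hmem : (⟨m, hmn⟩ : Fin n) ∈ S := by simp [hSdef]; omega
          have := hmax' _ hmem
          simp [Fin.le_def] at this
          omega
        · have := hneg ⟨m, hmn⟩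
          omega
      · rfl
    have hnn : ∀ m : ℕ, 0 ≤ av n a m := by
      intro m
      unfold av
      split
      · exact hneg _
      · omega
    refine ⟨a + (-1:ℤ) • epsZ n i, i, 1, ?_, Or.inl rfl, ?_, ?_, ?_⟩
    · apply lam_sub_eps n t p k a i hLam hright hnn
      rw [av_coe]
      omega
    · funext j
      by_cases hj : j = i <;> simp [hj, epsZ]
    · rw [sum_add_eps n a (-1) i (fun x => |x|)]
      have h1 : |a i| = a i := abs_of_pos hi
      have h2 : |a i + -1| = a i + -1 := abs_of_nonneg (by omega)
      omega
    · rw [sum_add_eps n a (-1) i (fun x => x)]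
      ring

lemma p_le (p : ℕ → ℕ) (k : ℕ) (hmono : ∀ j, j < k → p j < p (j+1)) :
    ∀ j m, j ≤ m → m ≤ k → p j ≤ p m := by
  intro j m
  induction m with
  | zero =>
    intro h _
    have : j = 0 := by omega
    rw [this]
  | succ m ih =>
    intro hjm hmk
    rcases Nat.eq_or_lt_of_le hjm with h | h
    · rw [h]
    · have := ih (by omega) (by omega)
      have := hmono m (by omega)
      omega

lemma bigNorm (n : ℕ) (p : ℕ → ℕ) (k : ℕ)
    (hmono : ∀ j, j < k → p j < p (j+1)) (hpkn : p k < n) (a : Fin n → ℤ)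
    (hLam : Lam' n RSType.B p k a) (hne : av n a (n-1) ≠ 0) :
    ((n - p k : ℕ) : ℤ) ≤ ∑ j, |a j| := by
  have hnotp : ∀ m, p k < m → notp p k m := by
    intro m hm j h1 h2
    have := p_le p k hmono j k h2 le_rfl
    omega
  have hlast : 0 ≤ av n a (n-1) := hLam.2 (hnotp n hpkn)
  have key : ∀ d m, m + d = n - 1 → p k ≤ m → 1 ≤ av n a m := by
    intro d
    induction d with
    | zero =>
      intro m hm _
      have hm' : m = n - 1 := by omega
      rw [hm']
      rw [hm'] at *
      omega
    | succ d ih =>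
      intro m hm hpm
      have h1 : m + 1 < n := by omega
      have h2 := hLam.1 m h1 (hnotp (m+1) (by omega))
      have h3 := ih (m+1) (by omega) (by omega)
      omega
  have hrw : ∑ j : Fin n, |a j| = ∑ m ∈ Finset.range n, |av n a m| := by
    rw [← Fin.sum_univ_eq_sum_range (fun m => |av n a m|) n]
    apply Finset.sum_congr rfl
    intro j _
    rw [av_coe]
  rw [hrw]
  have hsub : Finset.Ico (p k) n ⊆ Finset.range n := by
    intro m hm
    simp at hm ⊢
    omega
  calc ((n - p k : ℕ) : ℤ) = ∑ _m ∈ Finset.Ico (p k) n, (1:ℤ) := by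
        rw [Finset.sum_const, Nat.card_Ico]; simp
    _ ≤ ∑ m ∈ Finset.Ico (p k) n, |av n a m| := by
        apply Finset.sum_le_sum
        intro m hm
        simp at hm
        have h1 := key (n - 1 - m) m (by omega) (by omega)
        exact le_trans h1 (le_abs_self _)
    _ ≤ ∑ m ∈ Finset.range n, |av n a m| := by
        apply Finset.sum_le_sum_of_subset_of_nonneg hsub
        intro m _ _
        exact abs_nonneg _

lemma exists_nat_cast_iff (z : ℤ) : (∃ m : ℕ, ((z:ℤ):ℝ) = (m:ℝ)) ↔ 0 ≤ z := by
  constructor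
  · rintro ⟨m, hm⟩
    have : z = (m:ℤ) := by exact_mod_cast hm
    omega
  · intro hz
    exact ⟨z.toNat, by exact_mod_cast (Int.toNat_of_nonneg hz).symm⟩

lemma inLamZ_iff (n : ℕ) (hn : 2 ≤ n) (t : RSType) (p : ℕ → ℕ) (k : ℕ) (a : Fin n → ℤ) :
    inLamZ n t p k a ↔ Lam' n t p k a := by
  constructor
  · intro H
    constructor
    · intro m hm hnp
      have h1 : m < n := by omega
      have := H ⟨m, h1⟩ hnp
      rw [pairing_lt n t _ ⟨m, h1⟩ (by simpa using hm)] at this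
      have : (0:ℤ) ≤ a ⟨m, h1⟩ - a ⟨m+1, hm⟩ := by
        rw [← exists_nat_cast_iff]
        simpa [sub_eq_iff_eq_add] using this
      simp only [av, dif_pos hm, dif_pos h1]
      omega
    · intro hnp
      have hlast : n - 1 < n := by omega
      set i : Fin n := ⟨n-1, hlast⟩ with hi
      have hip : (i:ℕ) + 1 = n := by simp [hi]; omega
      have hnlt : ¬((i:ℕ)+1 < n) := by omega
      have := H i (by rw [hip]; exact hnp)
      match t with
      | RSType.B =>
        rw [pairing_last_B n _ i hnlt] at this
        have h2 : (0:ℤ) ≤ 2 * a i := by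
          rw [← exists_nat_cast_iff]; push_cast; simpa using this
        simp only [av, dif_pos hlast]
        rw [← hi]
        omega
      | RSType.C =>
        rw [pairing_last_C n _ i hnlt] at this
        have h2 : (0:ℤ) ≤ a i := by rw [← exists_nat_cast_iff]; simpa using this
        simp only [av, dif_pos hlast]
        rw [← hi]
        omega
      | RSType.D =>
        rw [pairing_last_D n hn _ i hnlt] at this
        have h2 : (0:ℤ) ≤ a ⟨(i:ℕ)-1, by omega⟩ + a i := by
          rw [← exists_nat_cast_iff]; push_cast; simpa using this
        have e1 : n - 2 < n := by omega
        have e2 : (i:ℕ) - 1 = n - 2 := by simp [hi]; omega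
        simp only [av, dif_pos hlast, dif_pos e1]
        have h4 : a ⟨n-2, e1⟩ = a ⟨(i:ℕ)-1, by omega⟩ := congrArg a (Fin.ext e2.symm)
        have h3 : a ⟨n-1, hlast⟩ = a i := congrArg a hi.symm
        omega
  · intro H i hnp
    by_cases hlt : (i:ℕ)+1 < n
    · rw [pairing_lt n t _ i hlt]
      rw [show ((a i : ℝ) - (a ⟨(i:ℕ)+1, hlt⟩ : ℝ)) = (((a i - a ⟨(i:ℕ)+1, hlt⟩ : ℤ) : ℤ) : ℝ) by push_cast; ring]
      rw [exists_nat_cast_iff]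
      have := H.1 i hlt hnp
      simp only [av, dif_pos hlt, dif_pos i.isLt] at this
      have : a ⟨(i:ℕ)+1, hlt⟩ ≤ a i := by
        convert this using 2 <;> simp [Fin.ext_iff]
      omega
    · have hiv : (i:ℕ) = n - 1 := by have := i.isLt; omega
      have hend := H.2 (by rw [← show (i:ℕ)+1 = n by omega]; exact hnp)
      have hlast : n - 1 < n := by omega
      match t with
      | RSType.B =>
        rw [pairing_last_B n _ i hlt]
        rw [show (2 * (a i : ℝ)) = (((2 * a i : ℤ) : ℤ) : ℝ) by push_cast; ring]
        rw [exists_nat_cast_iff]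
        simp only [av, dif_pos hlast] at hend
        have hieq : i = (⟨n-1, hlast⟩ : Fin n) := Fin.ext (by simp; omega)
        rw [← hieq] at hend
        omega
      | RSType.C =>
        rw [pairing_last_C n _ i hlt]
        rw [show ((a i : ℝ)) = (((a i : ℤ) : ℤ) : ℝ) by push_cast; ring]
        rw [exists_nat_cast_iff]
        simp only [av, dif_pos hlast] at hend
        have hieq : i = (⟨n-1, hlast⟩ : Fin n) := Fin.ext (by simp; omega)
        rw [← hieq] at hend
        omega
      | RSType.D =>
        rw [pairing_last_D n hn _ i hlt]
        rw [show ((a ⟨(i:ℕ)-1, by omega⟩ : ℝ) + (a i : ℝ)) = (((a ⟨(i:ℕ)-1, by omega⟩ + a i : ℤ) : ℤ) : ℝ) by push_cast; ring]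
        rw [exists_nat_cast_iff]
        have e1 : n - 2 < n := by omega
        simp only [av, dif_pos hlast, dif_pos e1] at hend
        have h3 : a ⟨n-1, hlast⟩ = a i := by congr 1; simp [Fin.ext_iff]; omega
        have h4 : a ⟨n-2, e1⟩ = a ⟨(i:ℕ)-1, by omega⟩ := by congr 1; simp [Fin.ext_iff]; omega
        omega


lemma sum_abs_add_eps (n : ℕ) (μ : Fin n → ℤ) (h : ℤ) (i : Fin n) :
    ∑ j, |(μ + h • epsZ n i) j| = (∑ j, |μ j|) - |μ i| + |μ i + h| :=
  sum_add_eps n μ h i (fun x => |x|)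

lemma sum_id_add_eps (n : ℕ) (μ : Fin n → ℤ) (h : ℤ) (i : Fin n) :
    ∑ j, (μ + h • epsZ n i) j = (∑ j, μ j) + h := by
  have := sum_add_eps n μ h i (fun x => x)
  rw [this]
  ring

set_option maxHeartbeats 1000000 in
lemma KK_char (n k : ℕ) (hn : 2 ≤ n) (t : RSType) (p : ℕ → ℕ)
    (hmono : ∀ j, j < k → p j < p (j + 1))
    (b : Bool)
    (hb1 : b = true → ((t = RSType.C ∨ t = RSType.D) ∨ (t = RSType.B ∧ p k < n)))
    (hb2 : b = false → (t = RSType.B ∧ p k = n)) :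
    ∀ s : ℕ, (b = true → t = RSType.B → s ≤ n - p k) →
      KK n t p k s = {a | Lam' n t p k a ∧ (∑ j, |a j|) ≤ (s:ℤ) ∧
        (b = true → (2:ℤ) ∣ (∑ j, a j) - (s:ℤ))} := by
  intro s
  induction s with
  | zero =>
    intro _
    ext a
    simp only [KK, Set.mem_singleton_iff, Set.mem_setOf_eq]
    constructor
    · rintro rfl
      exact ⟨lam_zero n t p k, by simp, by simp⟩
    · rintro ⟨_, hsum, _⟩
      have h1 : ∀ j ∈ Finset.univ, (0:ℤ) ≤ |a j| := fun j _ => abs_nonneg _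
      have h2 : ∑ j, |a j| = 0 :=
        le_antisymm (by exact_mod_cast hsum) (Finset.sum_nonneg h1)
      funext j
      have := (Finset.sum_eq_zero_iff_of_nonneg h1).1 h2 j (Finset.mem_univ j)
      simpa using this
  | succ s ih =>
    intro hs
    have ihs := ih (fun hb ht => by have := hs hb ht; omega)
    ext a
    simp only [KK, Set.mem_iUnion, Set.mem_setOf_eq]
    constructor
    · rintro ⟨μ, hμK, hSS⟩
      obtain ⟨⟨i, h, hset, rfl⟩, hLamA⟩ := hSS
      rw [ihs] at hμK
      obtain ⟨hLamμ, hsumμ, hparμ⟩ := hμK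
      have hLa := (inLamZ_iff n hn t p k _).1 hLamA
      have hmem : h = 0 ∨ h = 1 ∨ h = -1 := by
        by_cases hc : (t = RSType.B ∧ (p k = n ∨ ∃ i' : Fin n, (i':ℕ) = n - 1 ∧ μ i' ≠ 0))
        · rw [if_pos hc] at hset
          simpa using hset
        · rw [if_neg hc] at hset
          simp at hset
          tauto
      have hcond : h = 0 → (t = RSType.B ∧
          (p k = n ∨ ∃ i' : Fin n, (i':ℕ) = n - 1 ∧ μ i' ≠ 0)) := by
        intro h0
        by_contra hc
        rw [if_neg hc, h0] at hset
        simp at hset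
      have hbne : b = true → (h = 1 ∨ h = -1) := by
        intro hbt
        rcases hmem with h0 | h1 | h1
        · exfalso
          obtain ⟨htB, hor⟩ := hcond h0
          subst htB
          rcases hb1 hbt with (hC | hD) | ⟨_, hpklt⟩
          · exact RSType.noConfusion hC
          · exact RSType.noConfusion hD
          · rcases hor with hpkn | ⟨i', hi'v, hi'ne⟩
            · omega
            · have hav : av n μ (n-1) ≠ 0 := by
                rw [← hi'v, av_coe]; exact hi'ne
              have hbig := bigNorm n p k hmono hpklt μ hLamμ hav
              have hsn := hs hbt rfl
              omega
        · exact Or.inl h1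
        · exact Or.inr h1
      refine ⟨hLa, ?_, ?_⟩
      · rw [sum_abs_add_eps]
        have habs1 : |μ i + h| ≤ |μ i| + |h| := abs_add_le _ _
        have habs2 : |h| ≤ 1 := by rcases hmem with rfl | rfl | rfl <;> norm_num
        push_cast
        omega
      · intro hbt
        rw [sum_id_add_eps]
        have hp := hparμ hbt
        rcases hbne hbt with rfl | rfl <;> push_cast <;> omega
    · rintro ⟨hLa, hsum, hpar⟩
      have hzlt : (0:ℕ) < n := by omega
      by_cases hsmall : (∑ j, |a j|) ≤ (s:ℤ)
      · rcases Bool.dichotomy b with hbv | hbv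
        · obtain ⟨htB, hpkn⟩ := hb2 hbv
          refine ⟨a, ?_, ?_⟩
          · rw [ihs]
            exact ⟨hLa, hsmall, fun hbt => by rw [hbv] at hbt; cases hbt⟩
          · refine ⟨⟨⟨0, hzlt⟩, 0, ?_, ?_⟩, (inLamZ_iff n hn t p k _).2 ?_⟩
            · rw [if_pos ⟨htB, Or.inl hpkn⟩]
              simp
            · funext j
              simp [epsZ]
            · exact hLa
        · have hpar' := hpar hbv
          have hd := abs_parity n a
          have hne : (∑ j, |a j|) ≠ (s:ℤ) := by
            intro heq
            push_cast at hpar'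
            omega
          set i0 : Fin n := ⟨0, hzlt⟩ with hi0
          have hLμ : Lam' n t p k (a + (1:ℤ) • epsZ n i0) :=
            lam_add_eps n t p k a i0 hLa (by intro m hm; simp [hi0] at hm)
          refine ⟨a + (1:ℤ) • epsZ n i0, ?_, ?_⟩
          · rw [ihs]
            refine ⟨hLμ, ?_, ?_⟩
            · rw [sum_abs_add_eps]
              have habs1 : |a i0 + 1| ≤ |a i0| + 1 := by
                have := abs_add_le (a i0) 1
                simpa using this
              omega
            · intro _
              rw [sum_id_add_eps]
              push_cast at hpar' ⊢
              omega
          · refine ⟨⟨i0, -1, ?_, ?_⟩, (inLamZ_iff n hn t p k _).2 ?_⟩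
            · split_ifs <;> simp
            · funext j
              by_cases hj : j = i0 <;> simp [hj, epsZ]
            · exact hLa
      · push_neg at hsmall
        have hpos : 0 < ∑ j, |a j| := by omega
        obtain ⟨μ, i, h, hLμ, hh, hEq, hsμ, htμ⟩ := step_back n t p k a hLa hpos
        refine ⟨μ, ?_, ?_⟩
        · rw [ihs]
          refine ⟨hLμ, by push_cast at hsum ⊢; omega, ?_⟩
          intro hbt
          have hp := hpar hbt
          rcases hh with rfl | rfl <;> push_cast at hp ⊢ <;> omega
        · refine ⟨⟨i, h, ?_, hEq⟩, (inLamZ_iff n hn t p k _).2 ?_⟩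
          · split_ifs <;> rcases hh with rfl | rfl <;> simp
          · exact hLa

lemma final_helper (n k : ℕ) (hn : 2 ≤ n) (t : RSType) (p : ℕ → ℕ)
    (hmono : ∀ j, j < k → p j < p (j + 1))
    (b : Bool)
    (hb1 : b = true → ((t = RSType.C ∨ t = RSType.D) ∨ (t = RSType.B ∧ p k < n)))
    (hb2 : b = false → (t = RSType.B ∧ p k = n))
    (r : ℕ) (hr : b = true → t = RSType.B → r ≤ n - p k) :
    KK n t p k r ⊆ Xr n (r : ℤ) ∧
    (KK n t p k r \ (if r < 2 then ∅ else KK n t p k (r - 2))) ∩ Xr n ((r : ℤ) - 2)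
      = ∅ := by
  have hchar := KK_char n k hn t p hmono b hb1 hb2
  constructor
  · intro a ha
    rw [hchar r hr] at ha
    exact ha.2.1
  · ext a
    simp only [Set.mem_inter_iff, Set.mem_diff, Set.mem_empty_iff_false, iff_false, not_and]
    rintro ⟨haK, hanot⟩ haX
    have haX' : (∑ i, |a i|) ≤ (r:ℤ) - 2 := haX
    by_cases hr2 : r < 2
    · have hnn : (0:ℤ) ≤ ∑ i, |a i| := Finset.sum_nonneg (fun _ _ => abs_nonneg _)
      omega
    · rw [if_neg hr2] at hanot
      apply hanot
      rw [hchar r hr] at haK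
      obtain ⟨hLa, _, hpar⟩ := haK
      rw [hchar (r-2) (fun hbt htB => by have := hr hbt htB; omega)]
      refine ⟨hLa, by omega, ?_⟩
      intro hbt
      have := hpar hbt
      omega

/-- Lemma 6.5: if `Φ` is of type `C_n` or `D_n`, or of type `B_n` with `α_n ∉ I`
(`p_k = n`), or of type `B_n` with `α_n ∈ I` and `r ≤ n - p_k`, then `K_r ⊆ 𝒳_r`;
moreover `(K_r \ K_{r-2}) ∩ 𝒳_{r-2} = ∅` (with `K_{r-2} = ∅` if `r < 2`). -/
theorem stmt15 (n k : ℕ) (hn : 2 ≤ n) (t : RSType)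
    (p : ℕ → ℕ) (hp0 : p 0 = 0)
    (hmono : ∀ j, j < k → p j < p (j + 1))
    (hpk : p k ≤ n) (hpk1 : p (k + 1) = n)
    (hpkD : t = RSType.D → p k ≠ n - 1)
    (r : ℕ)
    (hcase : (t = RSType.C ∨ t = RSType.D) ∨
      (t = RSType.B ∧ p k = n) ∨
      (t = RSType.B ∧ p k < n ∧ r ≤ n - p k)) :
    KK n t p k r ⊆ Xr n (r : ℤ) ∧
    (KK n t p k r \ (if r < 2 then ∅ else KK n t p k (r - 2))) ∩ Xr n ((r : ℤ) - 2)
      = ∅ := by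
  rcases hcase with hCD | hBn | hB3
  · exact final_helper n k hn t p hmono true (fun _ => Or.inl hCD)
      (fun hf => by cases hf) r
      (fun _ htB => by rcases hCD with hC | hD <;> subst htB <;>
        [exact RSType.noConfusion hC; exact RSType.noConfusion hD])
  · exact final_helper n k hn t p hmono false (fun hf => by cases hf)
      (fun _ => hBn) r (fun hf => by cases hf)
  · exact final_helper n k hn t p hmono true
      (fun _ => Or.inr ⟨hB3.1, hB3.2.1⟩) (fun hf => by cases hf) r
      (fun _ _ => hB3.2.2)
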